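/- For every concurrent epistemic game structure M, every coalition A ⊆ Agt, all sets of states P, S ⊆ St, and every state q: if q belongs to the least fixpoint of the monotone operator X ↦ E_A P ∪ (C_A S ∩ ⟨A⟩•X), then M,q ⊨ ⟨⟨A⟩⟩ S U P. (The fixpoint μZ.(E_A φ ∨ (C_A ψ ∧ ⟨A⟩•Z)) is a lower bound for the ATLir 'until' ability.) -/

import Mathlib

/-- A concurrent epistemic game structure (iCGS). -/
structure CEGS where
  Agt : Type
  St : Type
  AP : Type
  Act : Type
  agtFin : Finite Agt
  agtNe : Nonempty Agt
  stNe : Nonempty St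
  actFin : Finite Act
  actNe : Nonempty Act
  V : AP → Set St
  d : Agt → St → Set Act
  d_ne : ∀ a q, (d a q).Nonempty
  o : St → (Agt → Act) → St
  sim : Agt → St → St → Prop
  sim_equiv : ∀ a, Equivalence (sim a)
  uniform : ∀ a q q', sim a q q' → d a q = d a q'

namespace CEGS

variable (M : CEGS)

/-- An action profile available at state `q`. -/
def Avail (q : M.St) (α : M.Agt → M.Act) : Prop := ∀ a, α a ∈ M.d a q

/-- A path: an infinite sequence of states, each next state being the outcome of
some available action profile. -/
def IsPath (lam : ℕ → M.St) : Prop :=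
  ∀ i, ∃ α, M.Avail (lam i) α ∧ lam (i + 1) = M.o (lam i) α

/-- `s` is a collective ir-strategy (uniform, memoryless) for coalition `A`. -/
def IsIrStrat (A : Set M.Agt) (s : M.Agt → M.St → M.Act) : Prop :=
  ∀ a ∈ A, (∀ q, s a q ∈ M.d a q) ∧ (∀ q q', M.sim a q q' → s a q = s a q')

/-- `s` is a collective Ir-strategy (perfect information, memoryless) for coalition `A`. -/
def IsIrStratPI (A : Set M.Agt) (s : M.Agt → M.St → M.Act) : Prop :=
  ∀ a ∈ A, ∀ q, s a q ∈ M.d a q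

/-- `lam ∈ out(q, s_A)`: a path starting at `q` along which every agent of `A` plays `s`. -/
def InOut (A : Set M.Agt) (s : M.Agt → M.St → M.Act) (q : M.St) (lam : ℕ → M.St) : Prop :=
  lam 0 = q ∧ ∀ i, ∃ α, M.Avail (lam i) α ∧ (∀ a ∈ A, α a = s a (lam i)) ∧
    lam (i + 1) = M.o (lam i) α

/-- `lam ∈ out^ir(q, s_A) = ⋃_{a∈A} ⋃_{q ∼_a q'} out(q', s_A)`. -/
def InOutIr (A : Set M.Agt) (s : M.Agt → M.St → M.Act) (q : M.St) (lam : ℕ → M.St) : Prop :=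
  ∃ a ∈ A, ∃ q', M.sim a q q' ∧ M.InOut A s q' lam

/-- The "everybody knows" relation `∼_A^E = ⋃_{a∈A} ∼_a`. -/
def simE (A : Set M.Agt) (q q' : M.St) : Prop := ∃ a ∈ A, M.sim a q q'

/-- The "common knowledge" relation `∼_A^C`: transitive closure of `∼_A^E`. -/
def simC (A : Set M.Agt) : M.St → M.St → Prop := Relation.TransGen (M.simE A)

/-- Individual knowledge: `K_a X`. -/
def Know (a : M.Agt) (X : Set M.St) : Set M.St := {q | ∀ q', M.sim a q q' → q' ∈ X}

/-- Mutual knowledge: `E_A X`. -/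
def EKnow (A : Set M.Agt) (X : Set M.St) : Set M.St := {q | ∀ q', M.simE A q q' → q' ∈ X}

/-- Common knowledge: `C_A X`. -/
def CKnow (A : Set M.Agt) (X : Set M.St) : Set M.St := {q | ∀ q', M.simC A q q' → q' ∈ X}

/-- Next-step operator `⟨A⟩X` (imperfect information). -/
def Next (A : Set M.Agt) (X : Set M.St) : Set M.St :=
  {q | ∃ s, M.IsIrStrat A s ∧ ∀ lam, M.InOutIr A s q lam → lam 1 ∈ X}

/-- `Reach_M(s_A, Q, X)`. -/
def ReachSet (A : Set M.Agt) (s : M.Agt → M.St → M.Act) (Q X : Set M.St) : Set M.St :=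
  {q | q ∈ Q ∧ ∀ lam, M.InOut A s q lam → ∃ i, lam i ∈ X ∧ ∀ j < i, lam j ∈ Q}

/-- Steadfast next-step operator `⟨A⟩•X`. -/
def NextStead (A : Set M.Agt) (X : Set M.St) : Set M.St :=
  {q | ∃ s, M.IsIrStrat A s ∧
    M.ReachSet A s {q' | M.simC A q q'} X = {q' | M.simC A q q'}}

/-- `M,q ⊨ ⟨⟨A⟩⟩◇P` (ATLir reachability, ir-strategies). -/
def CanReach (A : Set M.Agt) (P : Set M.St) (q : M.St) : Prop :=
  ∃ s, M.IsIrStrat A s ∧ ∀ lam, M.InOutIr A s q lam → ∃ i, lam i ∈ P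

/-- `M,q ⊨ ⟨⟨A⟩⟩□P` (ATLir safety, ir-strategies). -/
def CanGlobally (A : Set M.Agt) (P : Set M.St) (q : M.St) : Prop :=
  ∃ s, M.IsIrStrat A s ∧ ∀ lam, M.InOutIr A s q lam → ∀ i, lam i ∈ P

/-- `M,q ⊨ ⟨⟨A⟩⟩ S U P` (ATLir until, ir-strategies). -/
def CanUntil (A : Set M.Agt) (S P : Set M.St) (q : M.St) : Prop :=
  ∃ s, M.IsIrStrat A s ∧ ∀ lam, M.InOutIr A s q lam →
    ∃ i, lam i ∈ P ∧ ∀ j < i, lam j ∈ S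

/-- Perfect-information next-step operator `N^Ir_A(X)`. -/
def NextPI (A : Set M.Agt) (X : Set M.St) : Set M.St :=
  {q | ∃ t, M.IsIrStratPI A t ∧ ∀ lam, M.InOut A t q lam → lam 1 ∈ X}

/-- Perfect-information "globally" operator `G^Ir_A(X)`. -/
def GloballyPI (A : Set M.Agt) (X : Set M.St) : Set M.St :=
  {q | ∃ t, M.IsIrStratPI A t ∧ ∀ lam, M.InOut A t q lam → ∀ i, lam i ∈ X}

/-- Perfect-information "until" operator `U^Ir_A(Y, X)`. -/
def UntilPI (A : Set M.Agt) (Y X : Set M.St) : Set M.St :=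
  {q | ∃ t, M.IsIrStratPI A t ∧ ∀ lam, M.InOut A t q lam →
    ∃ i, lam i ∈ X ∧ ∀ j < i, lam j ∈ Y}

end CEGS

/-- Knaster–Tarski least fixpoint of a set operator. -/
def lfpSet {σ : Type} (f : Set σ → Set σ) : Set σ := sInf {X | f X ⊆ X}

/-- Knaster–Tarski greatest fixpoint of a set operator. -/
def gfpSet {σ : Type} (f : Set σ → Set σ) : Set σ := sSup {X | X ⊆ f X}


/-!
Rank the states of the least fixpoint by the ordinal stage at which they enter its
approximation sequence. On each common-knowledge class `c` the coalition commits to one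
uniform strategy, namely one that steers all of `c` into the *earliest* approximation stage it
can reach; these per-class strategies glue into a single uniform strategy because
`∼_a ⊆ ∼_A^C` for `a ∈ A`. A play that follows the glued strategy follows the class strategy
as long as it stays in `c`, and since every finite prefix extends to a full play, it reaches a
strictly earlier stage before leaving `c`. Transfinite induction on the stage yields `S U P`.
-/

open OrdinalApprox

theorem exists_until_of_shift {σ : Type*} {S P : Set σ} {lam : ℕ → σ} {i : ℕ}
    (hpre : ∀ j < i, lam j ∈ S) (h : ∃ k, lam (i + k) ∈ P ∧ ∀ j < k, lam (i + j) ∈ S) :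
    ∃ n, lam n ∈ P ∧ ∀ j < n, lam j ∈ S := by
  obtain ⟨k, hkP, hkS⟩ := h
  refine ⟨i + k, hkP, fun j hj => ?_⟩
  rcases lt_or_ge j i with hji | hij
  · exact hpre j hji
  · obtain ⟨m, rfl⟩ := Nat.exists_eq_add_of_le hij
    exact hkS m (by omega)

theorem OrdinalApprox.exists_lt_mem_lfpApprox {σ : Type*} {f : Set σ →o Set σ} {β : Ordinal}
    {q : σ} (h : q ∈ lfpApprox f ⊥ β) : ∃ β' < β, q ∈ f (lfpApprox f ⊥ β') := by
  rw [lfpApprox] at h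
  simpa using h

def prefixThen {σ : Type*} (lam μ : ℕ → σ) (n : ℕ) : ℕ → σ :=
  fun k => if k ≤ n then lam k else μ (k - n)

theorem prefixThen_of_le {σ : Type*} {lam μ : ℕ → σ} {n k : ℕ} (hk : k ≤ n) :
    prefixThen lam μ n k = lam k :=
  if_pos hk

namespace CEGS

variable {M : CEGS} {A : Set M.Agt}

theorem simE_symm {q q' : M.St} (h : M.simE A q q') : M.simE A q' q :=
  let ⟨a, ha, h⟩ := h
  ⟨a, ha, (M.sim_equiv a).symm h⟩

theorem simC_symm {q q' : M.St} (h : M.simC A q q') : M.simC A q' q := by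
  induction h with
  | single h => exact .single (simE_symm h)
  | tail _ h ih => exact .head (simE_symm h) ih

variable (A) in
def ckClass (q : M.St) : Set M.St := {q' | M.simC A q q'}

theorem ckClass_eq_of_simC {q q' : M.St} (h : M.simC A q q') : ckClass A q = ckClass A q' :=
  Set.ext fun _ => ⟨(simC_symm h).trans, h.trans⟩

theorem IsIrStrat.isIrStratPI {s : M.Agt → M.St → M.Act} (hs : M.IsIrStrat A s) :
    M.IsIrStratPI A s :=
  fun a ha => (hs a ha).1

variable (M) in
noncomputable def someAction (a : M.Agt) (q : M.St) : M.Act :=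
  haveI := M.actNe
  Classical.epsilon (· ∈ M.d a q)

theorem someAction_mem (a : M.Agt) (q : M.St) : someAction M a q ∈ M.d a q :=
  Classical.epsilon_spec (M.d_ne a q)

theorem isIrStrat_someAction : M.IsIrStrat A (someAction M) :=
  fun a _ => ⟨someAction_mem a, fun q q' h => by
    rw [someAction, someAction, M.uniform a q q' h]⟩

variable (A) in
def Step (s : M.Agt → M.St → M.Act) (x y : M.St) : Prop :=
  ∃ α, M.Avail x α ∧ (∀ a ∈ A, α a = s a x) ∧ y = M.o x α

theorem Step.of_agree {s s' : M.Agt → M.St → M.Act} {x y : M.St} (h : Step A s x y)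
    (hx : ∀ a ∈ A, s a x = s' a x) : Step A s' x y :=
  let ⟨α, hav, hα, hy⟩ := h
  ⟨α, hav, fun a ha => (hα a ha).trans (hx a ha), hy⟩

theorem exists_inOut {s : M.Agt → M.St → M.Act} (hs : M.IsIrStratPI A s) (q : M.St) :
    ∃ lam, M.InOut A s q lam := by
  classical
  let prof : M.St → M.Agt → M.Act := fun x a => if a ∈ A then s a x else someAction M a x
  refine ⟨fun n => (fun x => M.o x (prof x))^[n] q, rfl, fun n =>
    ⟨prof _, fun a => ?_, fun a ha => if_pos ha, Function.iterate_succ_apply' _ _ _⟩⟩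
  by_cases ha : a ∈ A
  · simpa [prof, ha] using hs a ha _
  · simpa [prof, ha] using someAction_mem a _

theorem inOut_prefixThen {s : M.Agt → M.St → M.Act} {q : M.St} {lam μ : ℕ → M.St} {n : ℕ}
    (h0 : lam 0 = q) (hpre : ∀ k < n, Step A s (lam k) (lam (k + 1)))
    (hμ : M.InOut A s (lam n) μ) : M.InOut A s q (prefixThen lam μ n) := by
  have hge : ∀ k, n ≤ k → prefixThen lam μ n k = μ (k - n) := by
    intro k hk
    rcases hk.eq_or_lt with rfl | hlt
    · simp [prefixThen_of_le le_rfl, hμ.1]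
    · simp [prefixThen, hlt.not_ge]
  refine ⟨by rw [prefixThen_of_le n.zero_le, h0], fun k => ?_⟩
  rcases lt_or_ge k n with hk | hk
  · rw [prefixThen_of_le hk.le, prefixThen_of_le hk]
    exact hpre k hk
  · rw [hge k hk, hge (k + 1) (by omega), Nat.sub_add_comm hk]
    exact hμ.2 _

theorem InOut.shift {s : M.Agt → M.St → M.Act} {q : M.St} {lam : ℕ → M.St}
    (h : M.InOut A s q lam) (i : ℕ) : M.InOut A s (lam i) (fun k => lam (i + k)) :=
  ⟨rfl, fun k => h.2 (i + k)⟩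

theorem exists_reach_of_agree {s s' : M.Agt → M.St → M.Act} {Q X : Set M.St} {q : M.St}
    {lam : ℕ → M.St} (hs : M.IsIrStratPI A s) (hq : q ∈ M.ReachSet A s Q X)
    (hagree : ∀ a ∈ A, ∀ y ∈ Q, s' a y = s a y) (hlam : M.InOut A s' q lam) :
    ∃ i, lam i ∈ X ∧ ∀ j < i, lam j ∈ Q := by
  by_contra hno
  push Not at hno
  have hstep : ∀ k, lam k ∈ Q → Step A s (lam k) (lam (k + 1)) :=
    fun k hk => Step.of_agree (hlam.2 k) fun a ha => hagree a ha _ hk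
  -- The `s`-play extending `lam|[0, n]` reaches `X` only after time `n`, inside `Q`.
  have hQ : ∀ n, lam n ∈ Q := by
    intro n
    induction n using Nat.strong_induction_on with
    | _ n ih =>
      obtain ⟨μ, hμ⟩ := exists_inOut hs (lam n)
      obtain ⟨i, hiX, hiQ⟩ :=
        hq.2 _ (inOut_prefixThen hlam.1 (fun k hk => hstep k (ih k hk)) hμ)
      rcases le_or_gt i n with hin | hni
      · obtain ⟨j, hji, hj⟩ := hno i (by rwa [prefixThen_of_le hin] at hiX)
        have hjQ := hiQ j hji
        rw [prefixThen_of_le (hji.le.trans hin)] at hjQ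
        exact absurd hjQ hj
      · simpa [prefixThen_of_le le_rfl] using hiQ n hni
  obtain ⟨i, hiX, -⟩ := hq.2 lam ⟨hlam.1, fun k => hstep k (hQ k)⟩
  obtain ⟨j, -, hj⟩ := hno i hiX
  exact hj (hQ j)

variable (A) in
def classwise (t : Set M.St → M.Agt → M.St → M.Act) : M.Agt → M.St → M.Act :=
  fun a y => t (ckClass A y) a y

theorem isIrStrat_classwise {t : Set M.St → M.Agt → M.St → M.Act}
    (ht : ∀ c, M.IsIrStrat A (t c)) : M.IsIrStrat A (classwise A t) := by
  refine fun a ha => ⟨fun q => (ht _ a ha).1 q, fun q q' h => ?_⟩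
  simp only [classwise, ckClass_eq_of_simC (.single ⟨a, ha, h⟩ : M.simC A q q')]
  exact (ht _ a ha).2 q q' h

theorem classwise_eq_of_mem {t : Set M.St → M.Agt → M.St → M.Act} {q y : M.St}
    (hy : y ∈ ckClass A q) (a : M.Agt) : classwise A t a y = t (ckClass A q) a y := by
  simp only [classwise, ckClass_eq_of_simC hy]

variable (A) in
def Steers (c X : Set M.St) : Prop :=
  ∃ s, M.IsIrStrat A s ∧ M.ReachSet A s c X = c

theorem reachSet_mono {s : M.Agt → M.St → M.Act} {Q X Y : Set M.St} (h : X ⊆ Y) :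
    M.ReachSet A s Q X ⊆ M.ReachSet A s Q Y :=
  fun _ ⟨hq, hr⟩ => ⟨hq, fun lam hlam =>
    let ⟨i, hi, hj⟩ := hr lam hlam
    ⟨i, h hi, hj⟩⟩

theorem nextStead_mono {X Y : Set M.St} (h : X ⊆ Y) : M.NextStead A X ⊆ M.NextStead A Y :=
  fun _ ⟨s, hs, hr⟩ =>
    ⟨s, hs, Set.Subset.antisymm (fun _ hz => hz.1) fun _ hz => reachSet_mono h (hr.ge hz)⟩

section Stage

variable (f : Set M.St →o Set M.St)

variable (A) in
noncomputable def steerStage (c : Set M.St) : Ordinal :=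
  sInf {β | Steers A c (lfpApprox f ⊥ β)}

open Classical in
variable (A) in
noncomputable def steerStrat (c : Set M.St) : M.Agt → M.St → M.Act :=
  if h : Steers A c (lfpApprox f ⊥ (steerStage A f c)) then h.choose else someAction M

theorem isIrStrat_steerStrat (c : Set M.St) : M.IsIrStrat A (steerStrat A f c) := by
  unfold steerStrat
  split_ifs with h
  exacts [h.choose_spec.1, isIrStrat_someAction]

theorem steerStrat_spec {c : Set M.St} {β : Ordinal} (h : Steers A c (lfpApprox f ⊥ β)) :
    steerStage A f c ≤ β ∧
      M.ReachSet A (steerStrat A f c) c (lfpApprox f ⊥ (steerStage A f c)) = c := by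
  have hmin : Steers A c (lfpApprox f ⊥ (steerStage A f c)) :=
    csInf_mem (s := {β | Steers A c (lfpApprox f ⊥ β)}) ⟨β, h⟩
  refine ⟨csInf_le' h, ?_⟩
  rw [steerStrat, dif_pos hmin]
  exact hmin.choose_spec.2

end Stage

variable (A) in
def untilOp (P S : Set M.St) : Set M.St →o Set M.St where
  toFun X := M.EKnow A P ∪ (M.CKnow A S ∩ M.NextStead A X)
  monotone' _ _ h :=
    Set.union_subset_union_right _ (Set.inter_subset_inter_right _ (nextStead_mono h))

variable (A) in
noncomputable def untilStrat (P S : Set M.St) : M.Agt → M.St → M.Act :=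
  classwise A (steerStrat A (untilOp A P S))

theorem until_of_mem_lfpApprox {P S : Set M.St} (β : Ordinal) :
    ∀ q ∈ lfpApprox (untilOp A P S) ⊥ β, ∀ lam, M.InOutIr A (untilStrat A P S) q lam →
      ∃ i, lam i ∈ P ∧ ∀ j < i, lam j ∈ S := by
  induction β using WellFoundedLT.induction with
  | _ β ih =>
  rintro q hq lam ⟨a, ha, q', hqq', hlam⟩
  obtain ⟨β', hβ', hqP | ⟨hqS, hqN⟩⟩ := exists_lt_mem_lfpApprox hq
  · exact ⟨0, hlam.1 ▸ hqP q' ⟨a, ha, hqq'⟩, fun j hj => absurd hj j.not_lt_zero⟩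
  · have hq' : q' ∈ ckClass A q := .single ⟨a, ha, hqq'⟩
    obtain ⟨hle, hreach⟩ := steerStrat_spec _ hqN
    obtain ⟨i, hi, hpre⟩ := exists_reach_of_agree (isIrStrat_steerStrat _ _).isIrStratPI
      (hreach.ge hq') (fun b _ y hy => classwise_eq_of_mem hy b) hlam
    exact exists_until_of_shift (fun j hj => hqS _ (hpre j hj))
      (ih _ (hle.trans_lt hβ') _ hi _ ⟨a, ha, _, (M.sim_equiv a).refl _, hlam.shift i⟩)

end CEGS

/-- the fixpoint `μX.(E_A P ∪ (C_A S ∩ ⟨A⟩•X))` is a lower bound for the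
ATLir "until" ability `⟨⟨A⟩⟩ S U P`. -/
theorem steadfast_lfp_lower_bound_until (M : CEGS) (A : Set M.Agt) (P S : Set M.St)
    (q : M.St)
    (h : q ∈ lfpSet (fun X => M.EKnow A P ∪ (M.CKnow A S ∩ M.NextStead A X))) :
    M.CanUntil A S P q := by
  obtain ⟨γ, hγ⟩ := lfp_mem_range_lfpApprox (CEGS.untilOp A P S)
  have hq : q ∈ lfpApprox (CEGS.untilOp A P S) ⊥ γ := hγ ▸ h
  exact ⟨CEGS.untilStrat A P S, CEGS.isIrStrat_classwise (CEGS.isIrStrat_steerStrat _),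
    CEGS.until_of_mem_lfpApprox γ q hq⟩
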